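/- arXiv:2110.01340 — 5 statements merged into one kernel-verified Lean document; each statement's English description precedes it below -/
import Mathlib

section
/- Let N ≥ 1 and P ≥ 1 be integers, let δt > 0 and β > 0, and let m_k^p ≥ 0 for k ∈ {1,…,N}, p ∈ {1,…,P} with m_k^* := Σ_{p=1}^P m_k^p. Assume m_k^* > β for every k and Σ_{k=1}^N m_k^p > 0 for every p. Given real numbers u_k^{1/2} and u_k^0 for k ∈ {1,…,N}, define α_k := (u_k^{1/2} − u_k^0) / (δt · max(m_k^*, β)), λ^p := − (Σ_{k=1}^N m_k^p α_k) / (Σ_{k=1}^N m_k^p (√(2 W(u_k^{1/2})) + β)), λ̃_k := Σ_{p=1}^P m_k^p λ^p, and u_k^1 := u_k^{1/2} + δt · λ̃_k · (√(2 W(u_k^{1/2})) + β). Then Σ_{k=1}^N u_k^1 = Σ_{k=1}^N u_k^0 (the projection step exactly conserves the partition constraint). -/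
/-!
Write `g k = √(2 W(u_k^{1/2})) + β ≥ β > 0`. Each multiplier `λ^p` is chosen so that
`λ^p · Σ_k m_k^p g_k = -Σ_k m_k^p α_k`; summing over `p` and exchanging the sums gives
`Σ_k λ̃_k g_k = -Σ_k m_k^* α_k`. Since `m_k^* > β`, the maximum in `α_k` is `m_k^*`, so
`δt · m_k^* α_k = u_k^{1/2} - u_k^0`, and the increments of the projection step add up to
exactly `Σ_k (u_k^0 - u_k^{1/2})`.
-/

open Finset

variable {ι κ : Type*} [Fintype ι] [Fintype κ]

lemma sum_mul_pos_of_le {w g : ι → ℝ} {β : ℝ} (hβ : 0 < β) (hw : ∀ k, 0 ≤ w k)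
    (hsum : 0 < ∑ k, w k) (hg : ∀ k, β ≤ g k) : 0 < ∑ k, w k * g k :=
  calc 0 < (∑ k, w k) * β := mul_pos hsum hβ
    _ = ∑ k, w k * β := sum_mul _ _ _
    _ ≤ ∑ k, w k * g k := sum_le_sum fun k _ => mul_le_mul_of_nonneg_left (hg k) (hw k)

lemma sum_sum_mul_neg_div_mul (m : ι → κ → ℝ) (g a : ι → ℝ)
    (hden : ∀ p, ∑ j, m j p * g j ≠ 0) :
    ∑ k, (∑ p, m k p * (-(∑ j, m j p * a j) / ∑ j, m j p * g j)) * g k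
      = -∑ k, (∑ p, m k p) * a k := by
  calc ∑ k, (∑ p, m k p * (-(∑ j, m j p * a j) / ∑ j, m j p * g j)) * g k
      = ∑ p, (-(∑ j, m j p * a j) / ∑ j, m j p * g j) * ∑ k, m k p * g k := by
        simp only [sum_mul, mul_sum]
        rw [sum_comm]
        exact sum_congr rfl fun p _ => sum_congr rfl fun k _ => by ring
    _ = ∑ p, -∑ k, m k p * a k :=
        sum_congr rfl fun p _ => div_mul_cancel₀ _ (hden p)
    _ = -∑ k, (∑ p, m k p) * a k := by
        rw [sum_neg_distrib, sum_comm]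
        simp only [sum_mul]

theorem stmt0_general
    (N P : ℕ)
    (δt β : ℝ) (hδt : 0 < δt) (hβ : 0 < β)
    (m : Fin N → Fin P → ℝ) (hmnn : ∀ k p, 0 ≤ m k p)
    (mstar : Fin N → ℝ) (hmstar : ∀ k, mstar k = ∑ p, m k p)
    (hmstarβ : ∀ k, β < mstar k)
    (hcol : ∀ p, 0 < ∑ k, m k p)
    (W : ℝ → ℝ)
    (uhalf u0 : Fin N → ℝ)
    (α : Fin N → ℝ)
    (hα : ∀ k, α k = (uhalf k - u0 k) / (δt * max (mstar k) β))
    (lam : Fin P → ℝ)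
    (hlam : ∀ p, lam p =
      - (∑ k, m k p * α k) / (∑ k, m k p * (Real.sqrt (2 * W (uhalf k)) + β)))
    (lamt : Fin N → ℝ)
    (hlamt : ∀ k, lamt k = ∑ p, m k p * lam p)
    (u1 : Fin N → ℝ)
    (hu1 : ∀ k, u1 k = uhalf k + δt * lamt k * (Real.sqrt (2 * W (uhalf k)) + β)) :
    ∑ k, u1 k = ∑ k, u0 k := by
  set g : Fin N → ℝ := fun k => Real.sqrt (2 * W (uhalf k)) + β
  have hden : ∀ p, ∑ k, m k p * g k ≠ 0 := fun p =>
    (sum_mul_pos_of_le hβ (hmnn · p) (hcol p)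
      fun k => le_add_of_nonneg_left (Real.sqrt_nonneg _)).ne'
  have hlamt_g : ∑ k, lamt k * g k = -∑ k, mstar k * α k := by
    simp only [hlamt, hlam, hmstar]
    exact sum_sum_mul_neg_div_mul m g α hden
  have hincrement : ∀ k, δt * (mstar k * α k) = uhalf k - u0 k := fun k => by
    have hmstar_pos : 0 < mstar k := hβ.trans (hmstarβ k)
    rw [hα k, max_eq_left (hmstarβ k).le]
    field_simp
  calc ∑ k, u1 k = ∑ k, uhalf k + δt * ∑ k, lamt k * g k := by
        rw [mul_sum, ← sum_add_distrib]
        exact sum_congr rfl fun k _ => by rw [hu1 k]; ring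
    _ = ∑ k, uhalf k - ∑ k, (uhalf k - u0 k) := by
        rw [hlamt_g, mul_neg, mul_sum, sub_eq_add_neg, sum_congr rfl fun k _ => hincrement k]
    _ = ∑ k, u0 k := by rw [sum_sub_distrib]; ring

/-- The projection step of the splitting scheme exactly conserves the partition
constraint: with the regularized Lagrange multipliers, `∑ k, u1 k = ∑ k, u0 k`. -/
theorem stmt0
    (N P : ℕ) (hN : 1 ≤ N) (hP : 1 ≤ P)
    (δt β : ℝ) (hδt : 0 < δt) (hβ : 0 < β)
    (m : Fin N → Fin P → ℝ) (hmnn : ∀ k p, 0 ≤ m k p)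
    (mstar : Fin N → ℝ) (hmstar : ∀ k, mstar k = ∑ p, m k p)
    (hmstarβ : ∀ k, β < mstar k)
    (hcol : ∀ p, 0 < ∑ k, m k p)
    (W : ℝ → ℝ) (hW : ∀ s, W s = (1/2) * s^2 * (1-s)^2)
    (uhalf u0 : Fin N → ℝ)
    (α : Fin N → ℝ)
    (hα : ∀ k, α k = (uhalf k - u0 k) / (δt * max (mstar k) β))
    (lam : Fin P → ℝ)
    (hlam : ∀ p, lam p =
      - (∑ k, m k p * α k) / (∑ k, m k p * (Real.sqrt (2 * W (uhalf k)) + β)))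
    (lamt : Fin N → ℝ)
    (hlamt : ∀ k, lamt k = ∑ p, m k p * lam p)
    (u1 : Fin N → ℝ)
    (hu1 : ∀ k, u1 k = uhalf k + δt * lamt k * (Real.sqrt (2 * W (uhalf k)) + β)) :
    ∑ k, u1 k = ∑ k, u0 k :=
  stmt0_general N P δt β hδt hβ m hmnn mstar hmstar hmstarβ hcol W uhalf u0 α hα lam hlam lamt hlamt
    u1 hu1
end

section
/- Let N ≥ 2, P ≥ 1, and let m_k^p ≥ 0 for k ∈ {1,…,N}, p ∈ {1,…,P}. Set m_{kℓ}^p := hm(m_k^p, m_ℓ^p) and m_{kℓ} := Σ_{p=1}^P m_{kℓ}^p. Fix an index i and assume m_{ij} = 0 for every j ≠ i. Then the set S := {p : m_i^p = 0} satisfies: for every pair of distinct indices k ≠ ℓ one has Σ_{p∈S} m_{kℓ}^p = m_{kℓ}; in other words, one may discard all components p with m_i^p > 0 without changing any mobility, obtaining a decomposition in which m_i^p = 0 for all retained p. -/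
open Finset

/-- Harmonic combination of two nonnegative mobilities, with the convention
`hm 0 0 = 0` (encoding `1/hm a b = 1/a + 1/b` with `1/0⁺ = +∞`, `1/(+∞) = 0⁺`). -/
noncomputable def hm (a b : ℝ) : ℝ := if 0 < a + b then a * b / (a + b) else 0

lemma hm_nonneg {a b : ℝ} (ha : 0 ≤ a) (hb : 0 ≤ b) : 0 ≤ hm a b := by
  unfold hm; split_ifs with h
  · positivity
  · exact le_rfl

lemma hm_zero_right (a : ℝ) : hm a 0 = 0 := by
  unfold hm; split_ifs <;> simp

lemma hm_zero_left (b : ℝ) : hm 0 b = 0 := by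
  unfold hm; split_ifs <;> simp

/-- If all mobilities `m_{ij} = ∑_p hm (m i p) (m j p)` of interfaces involving
phase `i` vanish, then discarding all components `p` with `m i p > 0` does not
change any mobility `m_{kℓ}`. -/
theorem stmt2 (N P : ℕ) (hN : 2 ≤ N) (hP : 1 ≤ P)
    (m : Fin N → Fin P → ℝ) (hnn : ∀ k p, 0 ≤ m k p)
    (i : Fin N) (hi : ∀ j, j ≠ i → ∑ p, hm (m i p) (m j p) = 0) :
    ∀ k ℓ : Fin N, k ≠ ℓ →
      ∑ p ∈ Finset.univ.filter (fun p => m i p = 0), hm (m k p) (m ℓ p)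
        = ∑ p, hm (m k p) (m ℓ p) := by
  -- each term of the vanishing sums vanishes
  have key : ∀ j, j ≠ i → ∀ p, hm (m i p) (m j p) = 0 := by
    intro j hj p
    have h0 := hi j hj
    have := (Finset.sum_eq_zero_iff_of_nonneg
      (fun p _ => hm_nonneg (hnn i p) (hnn j p))).mp h0 p (mem_univ p)
    exact this
  -- if m i p > 0 then m j p = 0 for all j ≠ i
  have key2 : ∀ j, j ≠ i → ∀ p, 0 < m i p → m j p = 0 := by
    intro j hj p hp
    have h := key j hj p
    by_contra hne
    have hjp : 0 < m j p := lt_of_le_of_ne (hnn j p) (Ne.symm hne)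
    have hsum : 0 < m i p + m j p := by linarith
    unfold hm at h
    rw [if_pos hsum] at h
    have : m i p * m j p = 0 := by
      rcases div_eq_zero_iff.mp h with h' | h'
      · exact h'
      · linarith
    rcases mul_eq_zero.mp this with h' | h' <;> linarith
  intro k ℓ hkl
  rw [← Finset.sum_filter_add_sum_filter_not Finset.univ (fun p => m i p = 0)
    (fun p => hm (m k p) (m ℓ p))]
  have : ∑ p ∈ Finset.univ.filter (fun p => ¬ m i p = 0), hm (m k p) (m ℓ p) = 0 := by
    apply Finset.sum_eq_zero
    intro p hp
    have hip : 0 < m i p := lt_of_le_of_ne (hnn i p) (Ne.symm (mem_filter.mp hp).2)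
    by_cases hk : k = i
    · have hℓ : ℓ ≠ i := by rw [← hk]; exact hkl.symm
      rw [key2 ℓ hℓ p hip, hm_zero_right]
    · rw [key2 k hk p hip, hm_zero_left]
  rw [this, add_zero]
end

section
/- Let N ≥ 2 and let (m_{kℓ})_{1≤k<ℓ≤N} be nonnegative reals, extended symmetrically by m_{ℓk} = m_{kℓ}. For each pair k < ℓ and each index α ∈ {1,…,N}, define m_α^{kℓ} := 2 m_{kℓ} (δ_k(α) + δ_ℓ(α)), where δ_k(α) = 1 if α = k and 0 otherwise. Then for every pair of distinct indices i ≠ j one has Σ_{1≤k<ℓ≤N} hm(m_i^{kℓ}, m_j^{kℓ}) = m_{ij}; i.e., the canonical decomposition expresses every family of nonnegative mobilities as a sum of harmonically additive families. -/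
open Finset

lemma hm_self (x : ℝ) (hx : 0 ≤ x) : hm (2*x) (2*x) = x := by
  unfold hm
  rcases eq_or_lt_of_le hx with h | h
  · simp [← h]
  · rw [if_pos (by linarith)]
    field_simp
    ring

/-- The canonical decomposition `m α^{kℓ} = 2 m_{kℓ} (δ_k(α) + δ_ℓ(α))`
expresses every symmetric family of nonnegative mobilities as a sum over the
pairs `k < ℓ` of harmonically additive families. -/
theorem stmt4 (N : ℕ) (hN : 2 ≤ N) (m : Fin N → Fin N → ℝ)
    (hnn : ∀ i j, 0 ≤ m i j) (hsymm : ∀ i j, m i j = m j i)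
    (c : Fin N → Fin N → Fin N → ℝ)
    (hc : ∀ k ℓ a, c k ℓ a =
      2 * m k ℓ * ((if a = k then (1:ℝ) else 0) + (if a = ℓ then (1:ℝ) else 0))) :
    ∀ i j : Fin N, i ≠ j →
      ∑ p ∈ Finset.univ.filter (fun p : Fin N × Fin N => p.1 < p.2),
        hm (c p.1 p.2 i) (c p.1 p.2 j) = m i j := by
  intro i j hij
  set q : Fin N × Fin N := if i < j then (i, j) else (j, i) with hq
  have hji : ¬ i < j → j < i := fun h => lt_of_le_of_ne (not_lt.mp h) (Ne.symm hij)
  have hqmem : q ∈ Finset.univ.filter (fun p : Fin N × Fin N => p.1 < p.2) := by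
    simp only [mem_filter, mem_univ, true_and, hq]
    split
    · assumption
    · exact hji ‹_›
  rw [Finset.sum_eq_single_of_mem q hqmem]
  · rw [hq]
    by_cases hlt : i < j
    · rw [if_pos hlt]
      simp only [hc, if_pos rfl, if_neg hij, if_neg (Ne.symm hij)]
      norm_num
      exact hm_self _ (hnn i j)
    · rw [if_neg hlt]
      simp only [hc, if_pos rfl, if_neg hij, if_neg (Ne.symm hij)]
      norm_num
      rw [hm_self _ (hnn j i), hsymm]
  · intro p hp hpq
    simp only [mem_filter, mem_univ, true_and] at hp
    by_cases hi : i = p.1 ∨ i = p.2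
    · by_cases hj : j = p.1 ∨ j = p.2
      · exfalso
        apply hpq
        rcases hi with hi | hi <;> rcases hj with hj | hj
        · exact absurd (hi.trans hj.symm) hij
        · have hlt : i < j := by rw [hi, hj]; exact hp
          rw [hq, if_pos hlt]; exact Prod.ext hi.symm hj.symm
        · have hlt : j < i := by rw [hi, hj]; exact hp
          rw [hq, if_neg (not_lt.mpr (le_of_lt hlt))]
          exact Prod.ext hj.symm hi.symm
        · exact absurd (hi.trans hj.symm) hij
      · push_neg at hj
        have : c p.1 p.2 j = 0 := by
          rw [hc, if_neg hj.1, if_neg hj.2]; ring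
        rw [this, hm_zero_right]
    · push_neg at hi
      have : c p.1 p.2 i = 0 := by
        rw [hc, if_neg hi.1, if_neg hi.2]; ring
      rw [this, hm_zero_left]
end

section
/- Let 0 ≤ β < 1/2. Then there exist no nonnegative reals m_1, m_2, m_3 such that hm(m_1, m_2) = 1, hm(m_1, m_3) = 1, and hm(m_2, m_3) = β. In other words, the triplet of mobilities (m_{12}, m_{13}, m_{23}) = (1, 1, β) fails to be harmonically additive whenever β < 1/2. -/
/-- The triplet of mobilities `(1, 1, β)` fails to be harmonically additive
whenever `0 ≤ β < 1/2`. -/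
theorem stmt7 (β : ℝ) (hβ0 : 0 ≤ β) (hβ : β < 1/2) :
    ¬ ∃ m1 m2 m3 : ℝ, 0 ≤ m1 ∧ 0 ≤ m2 ∧ 0 ≤ m3 ∧
      hm m1 m2 = 1 ∧ hm m1 m3 = 1 ∧ hm m2 m3 = β := by
  rintro ⟨m1, m2, m3, h1, h2, h3, h12, h13, h23⟩
  unfold hm at h12 h13 h23
  split_ifs at h12 h13 h23 with p12 p13 p23
  · -- all sums positive
    have e12 : m1 * m2 = m1 + m2 := by field_simp at h12; linarith
    have e13 : m1 * m3 = m1 + m3 := by field_simp at h13; linarith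
    have e23 : m2 * m3 = β * (m2 + m3) := by field_simp at h23; linarith
    have hm1 : 0 < m1 := by nlinarith
    have hm2 : 0 < m2 := by nlinarith
    have hm3 : 0 < m3 := by nlinarith
    have h1gt : 1 < m1 := by nlinarith
    have heq : m2 = m3 := by nlinarith
    have hm2gt : 1 < m2 := by nlinarith
    nlinarith
  · have hm3 : m3 = 0 := by linarith
    rw [hm3] at h13
    simp at h13
  all_goals linarith
end

section
/- Let q(z) = 1/(1 + e^z) and W(s) = ½ s²(1−s)². Let V, H, c ∈ ℝ and a, b ≥ 0, and let U_i, U_j : ℝ → ℝ be twice continuously differentiable with U_i, U_i′, U_i″, U_j, U_j′, U_j″ bounded on ℝ. Assume that for all z ∈ ℝ: V q′(z) = c H q′(z) + a (U_i″(z) − W″(q(z)) U_i(z)) − b (U_j″(z) − W″(q(z)) U_j(z)). Then V = c H. -/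
/-! Put `F = a Uᵢ - b Uⱼ` and `k = V - c H`, so that `F'' - W''(q) F = k q'`. Differentiating the
logistic equation `q' = q² - q` twice gives `q''' = W''(q) q'`, so the Wronskian `F q'' - F' q'`
has derivative `-k q'²`, which does not change sign. The Wronskian tends to `0` at `±∞`, since
`F` and `F'` are bounded while `q'` and `q''` are polynomials in `q` vanishing at the limits `0`
and `1` of `q`. A monotone function vanishing at both ends is identically zero, hence
`k q'² ≡ 0`, and `q'(0) ≠ 0` forces `k = 0`. -/

open Real Filter Topology

theorem deriv_doubleWell :
    deriv (fun s : ℝ => 1 / 2 * s ^ 2 * (1 - s) ^ 2) = fun s => 2 * s ^ 3 - 3 * s ^ 2 + s := by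
  ext s
  have h := ((hasDerivAt_pow 2 s).const_mul (1 / 2)).fun_mul
    (((hasDerivAt_id' s).const_sub 1).fun_pow 2)
  rw [h.deriv]
  ring

theorem deriv_deriv_doubleWell (s : ℝ) :
    deriv (deriv fun s : ℝ => 1 / 2 * s ^ 2 * (1 - s) ^ 2) s = 6 * s ^ 2 - 6 * s + 1 := by
  have h := (((hasDerivAt_pow 3 s).const_mul 2).fun_sub
    ((hasDerivAt_pow 2 s).const_mul 3)).fun_add (hasDerivAt_id' s)
  rw [deriv_doubleWell, h.deriv]
  ring

theorem hasDerivAt_one_div_one_add_exp (z : ℝ) :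
    HasDerivAt (fun z => 1 / (1 + exp z)) ((1 / (1 + exp z)) ^ 2 - 1 / (1 + exp z)) z := by
  have h : 1 + exp z ≠ 0 := by positivity
  simp only [one_div]
  refine (((hasDerivAt_exp z).const_add 1).fun_inv h).congr_deriv ?_
  field_simp
  ring

theorem tendsto_one_div_one_add_exp_atTop :
    Tendsto (fun z => 1 / (1 + exp z)) atTop (𝓝 0) := by
  simpa only [one_div, Function.comp_def] using
    tendsto_inv_atTop_zero.comp (tendsto_atTop_add_const_left _ 1 tendsto_exp_atTop)

theorem tendsto_one_div_one_add_exp_atBot :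
    Tendsto (fun z => 1 / (1 + exp z)) atBot (𝓝 1) := by
  simpa using (tendsto_exp_atBot.const_add 1).inv₀ (by norm_num)

theorem contDiff_one_div_one_add_exp : ContDiff ℝ ⊤ (fun z => 1 / (1 + exp z)) := by
  fun_prop (disch := intro z; positivity)

section Logistic

variable {q : ℝ → ℝ}

theorem deriv_logistic (hq : ∀ z, HasDerivAt q (q z ^ 2 - q z) z) :
    deriv q = fun z => q z ^ 2 - q z :=
  funext fun z => (hq z).deriv

theorem hasDerivAt_deriv_logistic (hq : ∀ z, HasDerivAt q (q z ^ 2 - q z) z) (z : ℝ) :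
    HasDerivAt (deriv q) ((2 * q z - 1) * deriv q z) z := by
  rw [deriv_logistic hq]
  refine (((hq z).fun_pow 2).fun_sub (hq z)).congr_deriv ?_
  ring

theorem hasDerivAt_deriv_deriv_logistic (hq : ∀ z, HasDerivAt q (q z ^ 2 - q z) z) (z : ℝ) :
    HasDerivAt (deriv (deriv q)) ((6 * q z ^ 2 - 6 * q z + 1) * deriv q z) z := by
  have h2 : deriv (deriv q) = fun z => (2 * q z - 1) * deriv q z :=
    funext fun z => (hasDerivAt_deriv_logistic hq z).deriv
  rw [h2]
  refine ((((hq z).const_mul 2).sub_const 1).fun_mul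
    (hasDerivAt_deriv_logistic hq z)).congr_deriv ?_
  rw [(hq z).deriv]
  ring

theorem tendsto_deriv_logistic {l : Filter ℝ} {y : ℝ} (hq : ∀ z, HasDerivAt q (q z ^ 2 - q z) z)
    (hy : y ^ 2 = y) (hlim : Tendsto q l (𝓝 y)) :
    Tendsto (deriv q) l (𝓝 0) ∧ Tendsto (deriv (deriv q)) l (𝓝 0) := by
  have h1 : Tendsto (deriv q) l (𝓝 0) := by
    simpa [deriv_logistic hq, hy] using (hlim.pow 2).sub hlim
  refine ⟨h1, ?_⟩
  simpa [funext fun z => (hasDerivAt_deriv_logistic hq z).deriv] using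
    ((hlim.const_mul 2).sub_const 1).mul h1

end Logistic

noncomputable def wronskian (f g : ℝ → ℝ) (x : ℝ) : ℝ :=
  f x * deriv g x - deriv f x * g x

theorem hasDerivAt_wronskian {f g : ℝ → ℝ} (hf : ContDiff ℝ 2 f) (hg : ContDiff ℝ 2 g) (x : ℝ) :
    HasDerivAt (wronskian f g) (f x * deriv (deriv g) x - deriv (deriv f) x * g x) x := by
  have hf' : ContDiff ℝ 1 (deriv f) := hf.deriv'
  have hg' : ContDiff ℝ 1 (deriv g) := hg.deriv'
  refine (((hf.differentiable two_ne_zero x).hasDerivAt.fun_mul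
    (hg'.differentiable one_ne_zero x).hasDerivAt).fun_sub
    ((hf'.differentiable one_ne_zero x).hasDerivAt.fun_mul
    (hg.differentiable two_ne_zero x).hasDerivAt)).congr_deriv ?_
  ring

theorem tendsto_wronskian_zero {f g : ℝ → ℝ} {l : Filter ℝ} (hf : ∃ C, ∀ x, |f x| ≤ C)
    (hf' : ∃ C, ∀ x, |deriv f x| ≤ C) (hg : Tendsto g l (𝓝 0))
    (hg' : Tendsto (deriv g) l (𝓝 0)) : Tendsto (wronskian f g) l (𝓝 0) := by
  have h := (isBoundedUnder_le_mul_tendsto_zero (isBoundedUnder_of hf) hg').sub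
    (isBoundedUnder_le_mul_tendsto_zero (isBoundedUnder_of hf') hg)
  rwa [sub_zero] at h

theorem eq_zero_of_monotone_of_tendsto {G : ℝ → ℝ} (hG : Monotone G)
    (htop : Tendsto G atTop (𝓝 0)) (hbot : Tendsto G atBot (𝓝 0)) (x : ℝ) : G x = 0 :=
  le_antisymm (hG.ge_of_tendsto htop x) (hG.le_of_tendsto hbot x)

theorem eq_zero_of_hasDerivAt_mul_of_tendsto {G g : ℝ → ℝ} {k x₀ : ℝ}
    (hG : ∀ x, HasDerivAt G (k * g x) x) (hg : ∀ x, 0 ≤ g x) (hx₀ : 0 < g x₀)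
    (htop : Tendsto G atTop (𝓝 0)) (hbot : Tendsto G atBot (𝓝 0)) : k = 0 := by
  have hG0 : G = 0 := by
    ext x
    rcases le_total 0 k with hk | hk
    · exact eq_zero_of_monotone_of_tendsto
        (monotone_of_hasDerivAt_nonneg hG fun x => mul_nonneg hk (hg x)) htop hbot x
    · have := eq_zero_of_monotone_of_tendsto (G := fun x => -G x)
        (monotone_of_hasDerivAt_nonneg (fun x => (hG x).neg)
          fun x => neg_nonneg.2 (mul_nonpos_of_nonpos_of_nonneg hk (hg x)))
        (by simpa using htop.neg) (by simpa using hbot.neg) x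
      exact neg_eq_zero.1 this
  have hk : k * g x₀ = 0 := (hG x₀).unique (by rw [hG0]; exact hasDerivAt_const x₀ 0)
  exact (mul_eq_zero.1 hk).resolve_right hx₀.ne'

theorem stmt11_general (q W : ℝ → ℝ)
    (hq : ∀ z, q z = 1 / (1 + Real.exp z))
    (hW : ∀ s, W s = (1/2) * s^2 * (1-s)^2)
    (V H c a b : ℝ)
    (Ui Uj : ℝ → ℝ) (hUi : ContDiff ℝ 2 Ui) (hUj : ContDiff ℝ 2 Uj)
    (hUib : ∃ C, ∀ z, |Ui z| ≤ C) (hUi'b : ∃ C, ∀ z, |deriv Ui z| ≤ C)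
    (hUjb : ∃ C, ∀ z, |Uj z| ≤ C) (hUj'b : ∃ C, ∀ z, |deriv Uj z| ≤ C)
    (heq : ∀ z, V * deriv q z = c * H * deriv q z
      + a * (deriv (deriv Ui) z - deriv (deriv W) (q z) * Ui z)
      - b * (deriv (deriv Uj) z - deriv (deriv W) (q z) * Uj z)) :
    V = c * H := by
  have hq_eq : q = fun z => 1 / (1 + exp z) := funext hq
  have hq' : ∀ z, HasDerivAt q (q z ^ 2 - q z) z := by
    rw [hq_eq]; exact hasDerivAt_one_div_one_add_exp
  have hq'_smooth : ContDiff ℝ 2 (deriv q) := by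
    rw [hq_eq]; exact (contDiff_one_div_one_add_exp.of_le le_top).deriv'
  have hW'' : ∀ s, deriv (deriv W) s = 6 * s ^ 2 - 6 * s + 1 := by
    rw [funext hW]; exact deriv_deriv_doubleWell
  have hG : ∀ z, HasDerivAt (fun z => a * wronskian Ui (deriv q) z - b * wronskian Uj (deriv q) z)
      ((c * H - V) * deriv q z ^ 2) z := by
    intro z
    refine (((hasDerivAt_wronskian hUi hq'_smooth z).const_mul a).fun_sub
      ((hasDerivAt_wronskian hUj hq'_smooth z).const_mul b)).congr_deriv ?_
    have h := heq z
    rw [hW''] at h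
    rw [(hasDerivAt_deriv_deriv_logistic hq' z).deriv]
    linear_combination (deriv q z) * h
  have hG_lim : ∀ {l : Filter ℝ},
      Tendsto (deriv q) l (𝓝 0) ∧ Tendsto (deriv (deriv q)) l (𝓝 0) →
      Tendsto (fun z => a * wronskian Ui (deriv q) z - b * wronskian Uj (deriv q) z) l (𝓝 0) :=
    fun ⟨h, h'⟩ => by
      simpa using ((tendsto_wronskian_zero hUib hUi'b h h').const_mul a).sub
        ((tendsto_wronskian_zero hUjb hUj'b h h').const_mul b)
  have hq'_sq_pos : 0 < deriv q 0 ^ 2 := by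
    rw [deriv_logistic hq']
    norm_num [hq]
  have hk := eq_zero_of_hasDerivAt_mul_of_tendsto hG (fun z => sq_nonneg _) hq'_sq_pos
    (hG_lim (tendsto_deriv_logistic hq' (zero_pow two_ne_zero)
      (hq_eq ▸ tendsto_one_div_one_add_exp_atTop)))
    (hG_lim (tendsto_deriv_logistic hq' (one_pow 2) (hq_eq ▸ tendsto_one_div_one_add_exp_atBot)))
  linarith

/-- Identification of the normal velocity in the sharp interface limit:
if `V q′ = c H q′ + a (U_i″ − W″(q) U_i) − b (U_j″ − W″(q) U_j)` on `ℝ`,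
with `q` the optimal profile, `a, b ≥ 0`, and `U_i, U_j` of class `C²` with
bounded derivatives up to order 2, then `V = c H`. -/
theorem stmt11 (q W : ℝ → ℝ)
    (hq : ∀ z, q z = 1 / (1 + Real.exp z))
    (hW : ∀ s, W s = (1/2) * s^2 * (1-s)^2)
    (V H c a b : ℝ) (ha : 0 ≤ a) (hb : 0 ≤ b)
    (Ui Uj : ℝ → ℝ) (hUi : ContDiff ℝ 2 Ui) (hUj : ContDiff ℝ 2 Uj)
    (hUib : ∃ C, ∀ z, |Ui z| ≤ C) (hUi'b : ∃ C, ∀ z, |deriv Ui z| ≤ C)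
    (hUi''b : ∃ C, ∀ z, |deriv (deriv Ui) z| ≤ C)
    (hUjb : ∃ C, ∀ z, |Uj z| ≤ C) (hUj'b : ∃ C, ∀ z, |deriv Uj z| ≤ C)
    (hUj''b : ∃ C, ∀ z, |deriv (deriv Uj) z| ≤ C)
    (heq : ∀ z, V * deriv q z = c * H * deriv q z
      + a * (deriv (deriv Ui) z - deriv (deriv W) (q z) * Ui z)
      - b * (deriv (deriv Uj) z - deriv (deriv W) (q z) * Uj z)) :
    V = c * H :=
  stmt11_general q W hq hW V H c a b Ui Uj hUi hUj hUib hUi'b hUjb hUj'b heq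
end
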